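/- arXiv:1203.3222 — 2 statements merged into one kernel-verified Lean document; each statement's English description precedes it below -/
import Mathlib

section
/- If f : ℝ → ℝ is a discontinuous n-monomial, then sup_{h ≠ 0} |f(h)/h^n| = +∞; in particular f is unbounded on [1,2]. -/
noncomputable def fdiff (h : ℝ) (f : ℝ → ℝ) : ℝ → ℝ := fun x => f (x + h) - f x

def IsMonomial (n : ℕ) (f : ℝ → ℝ) : Prop :=
  ∀ x h : ℝ, (1 / (n.factorial : ℝ)) * ((fdiff h)^[n] f) x = f h

/-!
Write `Δ_h` for the forward difference. If `|f h| ≤ M |h| ^ n`, then `g x = f x - f 1 * x ^ n` is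
bounded on `[0, n]`, satisfies `Δ_1^n g = n! g 1 = 0`, and inherits the homogeneity
`g (m x) = m ^ n * g x` for `m : ℕ`. By Newton's formula, `g (w + r)` for `w ∈ [0, 1)`, `r : ℕ` is
a combination of `Δ_1^j g w`, `j < n`, with coefficients `r.choose j`, so `g` grows at most like
`x ^ (n - 1)` on `[0, ∞)`; against the homogeneity of degree `n` this forces `g = 0` there, and the
parity `f (-x) = (-1) ^ n * f x` gives `f = f 1 * x ^ n`, which is continuous. Finally the rational
homogeneity `f (q x) = q ^ n * f x` carries a point with large `|f h / h ^ n|` into `[1, 2]`.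
-/

open Finset Function Nat fwdDiff

section AddCommMonoid

variable {M G : Type*} [AddCommMonoid M] [AddCommGroup G]

lemma fwdDiff_nsmul (h : M) (F : M → G) (m : ℕ) (y : M) :
    Δ_[m • h] F y = ∑ i ∈ range m, Δ_[h] F (y + i • h) := by
  simp only [fwdDiff, add_assoc, ← succ_nsmul]
  rw [sum_range_sub (fun i => F (y + i • h)), zero_nsmul, add_zero]

lemma fwdDiff_commute (h k : M) : Function.Commute (fwdDiff (G := G) h) (fwdDiff k) := by
  intro F
  funext x
  simp only [fwdDiff, add_right_comm x h k]
  abel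

lemma fwdDiff_iter_nsmul_of_forall_eq {h : M} {F : M → G} {c : G} {j : ℕ}
    (hF : ∀ x, Δ_[h] ^[j] F x = c) (m : ℕ) (x : M) : Δ_[m • h] ^[j] F x = m ^ j • c := by
  induction j generalizing F c x with
  | zero => simpa using hF x
  | succ j ih =>
    have hstep : ∀ y, Δ_[h] ^[j] (Δ_[m • h] F) y = m • c := fun y => by
      rw [((fwdDiff_commute _ _).iterate_left j).eq, fwdDiff_nsmul]
      simp only [← iterate_succ_apply' (fwdDiff h), hF, sum_const, card_range]
    rw [iterate_succ_apply, ih hstep, smul_smul, pow_succ]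

lemma fwdDiff_iter_eq_zero_of_le {h : M} {F : M → G} {n j : ℕ} (hF : Δ_[h] ^[n] F = 0)
    (hj : n ≤ j) : Δ_[h] ^[j] F = 0 := by
  obtain ⟨k, rfl⟩ := Nat.exists_eq_add_of_le hj
  rw [add_comm, iterate_add_apply, hF]
  clear hj
  induction k with
  | zero => rfl
  | succ k ih => rw [iterate_succ_apply', ih]; exact fwdDiff_const h (0 : G)

lemma shift_eq_sum_range_fwdDiff_iter {h : M} {F : M → G} {n : ℕ} (hF : Δ_[h] ^[n] F = 0)
    (r : ℕ) (y : M) : F (y + r • h) = ∑ j ∈ range n, r.choose j • Δ_[h] ^[j] F y := by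
  rw [shift_eq_sum_fwdDiff_iter h F r y,
    sum_subset (range_subset_range.2 (Nat.le_add_right (r + 1) n)),
    ← sum_subset (range_subset_range.2 (Nat.le_add_left n (r + 1)))]
  · intro j _ hj
    rw [fwdDiff_iter_eq_zero_of_le hF (by simpa using hj), Pi.zero_apply, smul_zero]
  · intro j _ hj
    rw [Nat.choose_eq_zero_of_lt (by simpa [Nat.lt_succ_iff] using hj), zero_smul]

lemma norm_fwdDiff_iter_le {E : Type*} [SeminormedAddCommGroup E] {h : M} {F : M → E} {B : ℝ}
    {j : ℕ} {y : M} (hB : ∀ k ≤ j, ‖F (y + k • h)‖ ≤ B) : ‖Δ_[h] ^[j] F y‖ ≤ 2 ^ j * B := by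
  rw [fwdDiff_iter_eq_sum_shift]
  calc ‖∑ k ∈ range (j + 1), ((-1 : ℤ) ^ (j - k) * j.choose k) • F (y + k • h)‖
      ≤ ∑ k ∈ range (j + 1), (j.choose k : ℝ) * B := by
        refine (norm_sum_le _ _).trans (sum_le_sum fun k hk => ?_)
        refine (norm_zsmul_le _ _).trans ?_
        simp only [norm_mul, norm_pow, norm_neg, norm_one, one_pow, one_mul, Int.norm_natCast]
        exact mul_le_mul_of_nonneg_left (hB k (Nat.lt_succ_iff.1 (mem_range.1 hk))) (by positivity)
    _ = 2 ^ j * B := by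
        rw [← sum_mul, ← Nat.cast_sum, Nat.sum_range_choose, Nat.cast_pow, Nat.cast_ofNat]

end AddCommMonoid

section AddCommGroup

variable {M G : Type*} [AddCommGroup M] [AddCommGroup G]

lemma fwdDiff_iter_neg (h : M) (F : M → G) (j : ℕ) (x : M) :
    Δ_[-h] ^[j] F x = (-1 : ℤ) ^ j • Δ_[h] ^[j] F (x - j • h) := by
  induction j generalizing x with
  | zero => simp
  | succ j ih =>
    have e₁ : x + -h - j • h = x - (j + 1) • h := by rw [add_nsmul, one_nsmul]; abel
    have e₂ : x - j • h = x - (j + 1) • h + h := by rw [add_nsmul, one_nsmul]; abel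
    rw [iterate_succ_apply', iterate_succ_apply', fwdDiff, fwdDiff, ih, ih, e₁, e₂, pow_succ,
      mul_smul, ← smul_sub, neg_one_smul, neg_sub]

end AddCommGroup

lemma abs_le_of_fwdDiff_iter_one_eq_zero {g : ℝ → ℝ} {n : ℕ} {B : ℝ}
    (hg : Δ_[1] ^[n + 1] g = 0) (hB : ∀ y ∈ Set.Icc (0 : ℝ) (n + 1), |g y| ≤ B)
    {y : ℝ} (hy : 0 ≤ y) : |g y| ≤ (n + 1) * 2 ^ n * B * (y + 1) ^ n := by
  set r := ⌊y⌋₊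
  set w := y - r
  have hw₀ : 0 ≤ w := sub_nonneg.2 (Nat.floor_le hy)
  have hw₁ : w < 1 := by have := Nat.lt_floor_add_one y; simp only [w]; linarith
  have hB₀ : 0 ≤ B := (abs_nonneg _).trans (hB 0 ⟨le_rfl, by positivity⟩)
  have hterm : ∀ j ∈ range (n + 1), |r.choose j • Δ_[1] ^[j] g w| ≤ 2 ^ n * B * (y + 1) ^ n := by
    intro j hj
    have hjn : j ≤ n := Nat.lt_succ_iff.1 (mem_range.1 hj)
    have hmem : ∀ k ≤ j, w + k • (1 : ℝ) ∈ Set.Icc (0 : ℝ) (n + 1) := fun k hk => by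
      have : (k : ℝ) ≤ n := by exact_mod_cast hk.trans hjn
      rw [nsmul_one]; constructor <;> linarith
    have hΔ : |Δ_[1] ^[j] g w| ≤ 2 ^ n * B := calc
      |Δ_[1] ^[j] g w| ≤ 2 ^ j * B :=
        norm_fwdDiff_iter_le fun k hk => (Real.norm_eq_abs _).trans_le (hB _ (hmem k hk))
      _ ≤ 2 ^ n * B := by gcongr; norm_num
    have hchoose : (r.choose j : ℝ) ≤ (y + 1) ^ n := calc
      (r.choose j : ℝ) ≤ (r : ℝ) ^ j := by exact_mod_cast Nat.choose_le_pow r j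
      _ ≤ (y + 1) ^ j := by gcongr; linarith [Nat.floor_le hy]
      _ ≤ (y + 1) ^ n := pow_le_pow_right₀ (by linarith) hjn
    rw [nsmul_eq_mul, abs_mul, Nat.abs_cast, mul_comm]
    exact mul_le_mul hΔ hchoose (by positivity) (by positivity)
  calc |g y| = |∑ j ∈ range (n + 1), r.choose j • Δ_[1] ^[j] g w| := by
        rw [← shift_eq_sum_range_fwdDiff_iter hg, nsmul_one, sub_add_cancel]
    _ ≤ ∑ j ∈ range (n + 1), 2 ^ n * B * (y + 1) ^ n := (abs_sum_le_sum_abs _ _).trans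
        (sum_le_sum hterm)
    _ = (n + 1) * 2 ^ n * B * (y + 1) ^ n := by
        rw [sum_const, card_range, nsmul_eq_mul]; push_cast; ring

lemma eq_zero_of_fwdDiff_iter_one_eq_zero_of_homogeneous {g : ℝ → ℝ} {n : ℕ} {B : ℝ}
    (hg : Δ_[1] ^[n + 1] g = 0) (hhom : ∀ (m : ℕ) (y : ℝ), g (m * y) = m ^ (n + 1) * g y)
    (hB : ∀ y ∈ Set.Icc (0 : ℝ) (n + 1), |g y| ≤ B) {x : ℝ} (hx : 0 ≤ x) : g x = 0 := by
  have hC : 0 ≤ (n + 1) * 2 ^ n * B :=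
    mul_nonneg (by positivity) ((abs_nonneg _).trans (hB 0 ⟨le_rfl, by positivity⟩))
  have hK : ∀ m : ℕ, 0 < m → m * |g x| ≤ (n + 1) * 2 ^ n * B * (x + 1) ^ n := by
    intro m hm
    have hm₁ : (1 : ℝ) ≤ m := by exact_mod_cast hm
    refine le_of_mul_le_mul_left ?_ (pow_pos (by positivity : (0 : ℝ) < m) n)
    calc (m : ℝ) ^ n * (m * |g x|) = |g (m * x)| := by
          rw [hhom, abs_mul, abs_pow, Nat.abs_cast]; ring
      _ ≤ (n + 1) * 2 ^ n * B * (m * x + 1) ^ n :=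
          abs_le_of_fwdDiff_iter_one_eq_zero hg hB (by positivity)
      _ ≤ (n + 1) * 2 ^ n * B * (m * (x + 1)) ^ n := by gcongr; nlinarith
      _ = m ^ n * ((n + 1) * 2 ^ n * B * (x + 1) ^ n) := by rw [mul_pow]; ring
  by_contra hne
  have hpos : 0 < |g x| := abs_pos.2 hne
  obtain ⟨m, hm⟩ := exists_nat_gt ((n + 1) * 2 ^ n * B * (x + 1) ^ n / |g x|)
  have hm₀ : 0 < m := by
    have := div_nonneg (mul_nonneg hC (by positivity : (0 : ℝ) ≤ (x + 1) ^ n)) hpos.le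
    exact_mod_cast this.trans_lt hm
  linarith [hK m hm₀, (div_lt_iff₀ hpos).1 hm]

namespace IsMonomial

variable {n : ℕ} {f : ℝ → ℝ}

lemma fwdDiff_iter (hf : IsMonomial n f) (h x : ℝ) : Δ_[h] ^[n] f x = n ! * f h := by
  rw [← hf x h, ← mul_assoc, mul_one_div_cancel (by positivity), one_mul]
  rfl -- `fdiff h` is `Δ_[h]` unfolded

lemma map_nat_mul (hf : IsMonomial n f) (m : ℕ) (h : ℝ) : f (m * h) = m ^ n * f h := by
  have := fwdDiff_iter_nsmul_of_forall_eq (fun x => hf.fwdDiff_iter h x) m 0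
  simp only [hf.fwdDiff_iter, nsmul_eq_mul, Nat.cast_pow] at this
  exact mul_left_cancel₀ (by positivity) (this.trans (mul_left_comm _ _ _))

lemma map_neg (hf : IsMonomial n f) (h : ℝ) : f (-h) = (-1) ^ n * f h := by
  have := fwdDiff_iter_neg h f n 0
  rw [hf.fwdDiff_iter, hf.fwdDiff_iter, zsmul_eq_mul, Int.cast_pow, Int.cast_neg,
    Int.cast_one] at this
  exact mul_left_cancel₀ (by positivity) (this.trans (mul_left_comm _ _ _))

lemma map_int_mul (hf : IsMonomial n f) (z : ℤ) (h : ℝ) : f (z * h) = z ^ n * f h := by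
  obtain ⟨m, rfl | rfl⟩ := Int.eq_nat_or_neg z
  · exact_mod_cast hf.map_nat_mul m h
  · rw [Int.cast_neg, Int.cast_natCast, neg_mul, hf.map_neg, hf.map_nat_mul, neg_pow]; ring

lemma map_rat_mul (hf : IsMonomial n f) (q : ℚ) (h : ℝ) : f (q * h) = q ^ n * f h := by
  have hden : (q.den : ℝ) ≠ 0 := by positivity
  have hnum : (q.den : ℝ) * q = q.num := by exact_mod_cast q.den_mul_eq_num
  refine mul_left_cancel₀ (pow_ne_zero n hden) ?_
  rw [← hf.map_nat_mul, ← mul_assoc, hnum, hf.map_int_mul, ← hnum]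
  ring

lemma eq_mul_pow_of_bounded (hf : IsMonomial n f) {B : ℝ}
    (hB : ∀ y ∈ Set.Icc (0 : ℝ) n, |f y| ≤ B) (x : ℝ) : f x = f 1 * x ^ n := by
  rcases n with _ | n
  · simpa using hf x 1
  have hnonneg : ∀ x, 0 ≤ x → f x = f 1 * x ^ (n + 1) := by
    intro x hx
    set g : ℝ → ℝ := fun y => f y - f 1 * y ^ (n + 1)
    have hg : Δ_[1] ^[n + 1] g = 0 := by
      have : g = f + (-f 1) • fun y => y ^ (n + 1) := by
        funext y; simp only [g, Pi.add_apply, Pi.smul_apply, smul_eq_mul]; ring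
      rw [this, fwdDiff_iter_add, fwdDiff_iter_const_smul, fwdDiff_iter_eq_factorial]
      funext y
      simp only [Pi.add_apply, Pi.smul_apply, Pi.natCast_apply, Pi.zero_apply, smul_eq_mul,
        hf.fwdDiff_iter]
      ring
    have hhom : ∀ (m : ℕ) (y : ℝ), g (m * y) = m ^ (n + 1) * g y := by
      intro m y; simp only [g, hf.map_nat_mul]; ring
    have hgB : ∀ y ∈ Set.Icc (0 : ℝ) (n + 1), |g y| ≤ B + |f 1| * (n + 1) ^ (n + 1) := by
      rintro y ⟨hy₀, hy₁⟩
      calc |g y| ≤ |f y| + |f 1| * |y| ^ (n + 1) := by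
            simpa only [g, abs_mul, abs_pow] using abs_sub (f y) (f 1 * y ^ (n + 1))
        _ ≤ B + |f 1| * (n + 1) ^ (n + 1) := by
            gcongr
            · exact hB y ⟨hy₀, by push_cast; exact hy₁⟩
            · rwa [abs_of_nonneg hy₀]
    exact sub_eq_zero.1 (eq_zero_of_fwdDiff_iter_one_eq_zero_of_homogeneous hg hhom hgB hx)
  rcases le_or_gt 0 x with hx | hx
  · exact hnonneg x hx
  · rw [← neg_neg x, hf.map_neg, hnonneg _ (neg_nonneg.2 hx.le), neg_pow (-x)]; ring

lemma continuous_of_abs_div_pow_le (hf : IsMonomial n f) {M : ℝ}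
    (hM : ∀ h, h ≠ 0 → |f h / h ^ n| ≤ M) : Continuous f := by
  have hM₀ : 0 ≤ M := (abs_nonneg _).trans (hM 1 one_ne_zero)
  have hB : ∀ y ∈ Set.Icc (0 : ℝ) n, |f y| ≤ |f 0| + M * n ^ n := by
    rintro y ⟨hy₀, hyn⟩
    rcases hy₀.eq_or_lt with rfl | hy
    · exact le_add_of_nonneg_right (by positivity)
    calc |f y| = |f y / y ^ n| * y ^ n := by
          rw [abs_div, abs_of_pos (pow_pos hy n), div_mul_cancel₀ _ (pow_pos hy n).ne']
      _ ≤ M * n ^ n := mul_le_mul (hM y hy.ne') (pow_le_pow_left₀ hy.le hyn n) (by positivity) hM₀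
      _ ≤ |f 0| + M * n ^ n := le_add_of_nonneg_left (abs_nonneg _)
  rw [funext (hf.eq_mul_pow_of_bounded hB)]
  fun_prop

end IsMonomial

lemma exists_rat_mul_mem_Icc {h : ℝ} (hh : h ≠ 0) : ∃ q : ℚ, (q : ℝ) * h ∈ Set.Icc 1 2 := by
  rcases hh.lt_or_gt with hneg | hpos
  · obtain ⟨q, hq₁, hq₂⟩ := exists_rat_btwn ((div_lt_div_right_of_neg hneg).2 one_lt_two)
    exact ⟨q, (le_div_iff_of_neg hneg).1 hq₂.le, (div_le_iff_of_neg hneg).1 hq₁.le⟩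
  · obtain ⟨q, hq₁, hq₂⟩ := exists_rat_btwn ((div_lt_div_iff_of_pos_right hpos).2 one_lt_two)
    exact ⟨q, (div_le_iff₀ hpos).1 hq₁.le, (le_div_iff₀ hpos).1 hq₂.le⟩

theorem stmt6 (n : ℕ) (f : ℝ → ℝ) (hf : IsMonomial n f) (hdisc : ¬ Continuous f) :
    (∀ M : ℝ, ∃ h : ℝ, h ≠ 0 ∧ M < |f h / h ^ n|) ∧
    (∀ M : ℝ, ∃ x ∈ Set.Icc (1 : ℝ) 2, M < |f x|) := by
  have hunbounded : ∀ M : ℝ, ∃ h : ℝ, h ≠ 0 ∧ M < |f h / h ^ n| := by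
    by_contra! hbdd
    obtain ⟨M, hM⟩ := hbdd
    exact hdisc (hf.continuous_of_abs_div_pow_le hM)
  refine ⟨hunbounded, fun M => ?_⟩
  obtain ⟨h, hh, hM⟩ := hunbounded M
  obtain ⟨q, hq⟩ := exists_rat_mul_mem_Icc hh
  refine ⟨q * h, hq, hM.trans_le ?_⟩
  calc |f h / h ^ n| ≤ |(q : ℝ) * h| ^ n * |f h / h ^ n| :=
        le_mul_of_one_le_left (abs_nonneg _) (one_le_pow₀ (hq.1.trans (le_abs_self _)))
    _ = |f (q * h)| := by
        rw [hf.map_rat_mul, ← abs_pow, ← abs_mul, mul_pow, mul_assoc,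
          mul_div_cancel₀ _ (pow_ne_zero n hh)]
end

section
/- If f : ℝ → ℝ is a discontinuous n-monomial of even degree n, then the function F : ℝ² → ℝ given by F(x,h) = f(x+h) - f(x) has graph {(x, h, F(x,h))} dense in ℝ³. -/
/-!
Along a rational line `x + ℚ y` an `n`-monomial agrees with a polynomial of degree `≤ n` (Newton's
forward-difference formula, as `Δ^{n+1} f = 0`) whose coefficient of degree `n` is `f y`; in
particular `f (q y) = q ^ n f y` for rational `q`. If `f` were bounded near `0`, homogeneity would
bound it on bounded sets and these polynomials would make it locally Lipschitz. So a discontinuous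
`f` is unbounded near `0`; then near any point `p`, `f` or `-f` takes arbitrarily large values on
arbitrarily short rational segments from `p`, and by the intermediate value theorem the closure of
its graph contains the upward ray over `p`. For even `n` the maps `(x, T) ↦ (q x, q ^ n T)` preserve
the closed graph and sweep this ray over the whole region above a curve `T = β x ^ n`. Two points
`(a, T)`, `(a + b, T + c)` of that region show that `(a, b, c)` is a limit of increments
`(u, v - u, f v - f u)`.
-/

open Finset Polynomial Filter Set
open scoped Nat

lemma fdiff_eq_fwdDiff (h : ℝ) : fdiff h = fwdDiff h := rfl

lemma Polynomial.eq_of_eval_natCast_eq {p q : ℝ[X]}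
    (h : ∀ j : ℕ, p.eval (j : ℝ) = q.eval (j : ℝ)) : p = q :=
  eq_of_infinite_eval_eq p q <| (infinite_range_of_injective Nat.cast_injective).mono <| by
    rintro _ ⟨j, rfl⟩
    exact h j

noncomputable def newtonPoly (n : ℕ) (f : ℝ → ℝ) (x y : ℝ) : ℝ[X] :=
  ∑ k ∈ range (n + 1), C ((fdiff y)^[k] f x / k !) * descPochhammer ℝ k

section newtonPoly

variable {n : ℕ} {f : ℝ → ℝ} {x y : ℝ}

lemma coeff_newtonPoly_self : (newtonPoly n f x y).coeff n = (fdiff y)^[n] f x / n ! := by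
  have hlead : (descPochhammer ℝ n).coeff n = 1 := by
    simpa using (monic_descPochhammer ℝ n).coeff_natDegree
  rw [newtonPoly, finsetSum_coeff, sum_range_succ, sum_eq_zero, zero_add, coeff_C_mul, hlead,
    mul_one]
  intro k hk
  rw [coeff_C_mul, coeff_eq_zero_of_natDegree_lt (by simpa using hk), mul_zero]

lemma eval_newtonPoly_natCast (hvanish : ∀ k, n < k → (fdiff y)^[k] f x = 0) (j : ℕ) :
    (newtonPoly n f x y).eval (j : ℝ) = f (x + j * y) := by
  have hterm : ∀ k, (fdiff y)^[k] f x / k ! * (descPochhammer ℝ k).eval (j : ℝ)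
      = j.choose k * (fdiff y)^[k] f x := by
    intro k
    rw [descPochhammer_eval_eq_descFactorial, Nat.descFactorial_eq_factorial_mul_choose]
    push_cast
    field_simp
  have hN := shift_eq_sum_fwdDiff_iter y f j x
  simp only [nsmul_eq_mul] at hN
  rw [hN, newtonPoly, eval_finsetSum]
  simp only [eval_mul, eval_C, hterm, ← fdiff_eq_fwdDiff]
  rw [sum_subset (range_subset_range.mpr (Nat.le_add_right (n + 1) j)),
    sum_subset (range_subset_range.mpr (by omega : j + 1 ≤ n + 1 + j))]
  · intro k _ hk
    rw [Nat.choose_eq_zero_of_lt (by simpa using hk), Nat.cast_zero, zero_mul]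
  · intro k _ hk
    rw [hvanish k (by simpa using hk), mul_zero]

end newtonPoly

lemma abs_fdiff_iter_le {g : ℝ → ℝ} {x y K : ℝ} {k : ℕ} (hK : ∀ i ≤ k, |g (x + i * y)| ≤ K) :
    |(fdiff y)^[k] g x| ≤ 2 ^ k * K := by
  rw [fdiff_eq_fwdDiff, fwdDiff_iter_eq_sum_shift]
  calc |∑ i ∈ range (k + 1), ((-1 : ℤ) ^ (k - i) * k.choose i) • g (x + i • y)|
      ≤ ∑ i ∈ range (k + 1), (k.choose i : ℝ) * K := by
        refine (abs_sum_le_sum_abs _ _).trans (sum_le_sum fun i hi => ?_)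
        rw [zsmul_eq_mul, nsmul_eq_mul, abs_mul]
        push_cast
        rw [abs_mul, abs_pow, abs_neg, abs_one, one_pow, one_mul, Nat.abs_cast]
        exact mul_le_mul_of_nonneg_left (hK i (by simpa [Nat.lt_succ_iff] using hi))
          (Nat.cast_nonneg _)
    _ = 2 ^ k * K := by
        rw [← sum_mul]
        congr 1
        exact_mod_cast Nat.sum_range_choose k

lemma abs_eval_descPochhammer_le {s : ℝ} (hs0 : 0 ≤ s) (hs1 : s ≤ 1) {k : ℕ} (hk : 1 ≤ k) :
    |(descPochhammer ℝ k).eval s| ≤ k ! * s := by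
  induction k, hk using Nat.le_induction with
  | base => simp [abs_of_nonneg hs0]
  | succ k hk ih =>
    have hsk : |s - k| ≤ k := by
      rw [abs_sub_comm, abs_of_nonneg (by linarith [(Nat.one_le_cast (α := ℝ)).mpr hk])]
      linarith
    rw [descPochhammer_succ_eval, abs_mul, Nat.factorial_succ]
    push_cast
    calc |(descPochhammer ℝ k).eval s| * |s - k| ≤ (k ! * s) * k :=
          mul_le_mul ih hsk (abs_nonneg _) (by positivity)
      _ ≤ (k ! * s) * (k + 1) := mul_le_mul_of_nonneg_left (by linarith)
          (mul_nonneg (Nat.cast_nonneg _) hs0)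
      _ = (k + 1) * k ! * s := by ring

lemma abs_eval_newtonPoly_sub_le {n : ℕ} {g : ℝ → ℝ} {x y K s : ℝ} (hs0 : 0 ≤ s) (hs1 : s ≤ 1)
    (hK : ∀ i ≤ n, |g (x + i * y)| ≤ K) :
    |(newtonPoly n g x y).eval s - g x| ≤ n * (2 ^ n * K * s) := by
  have hK0 : 0 ≤ K := (abs_nonneg _).trans (by simpa using hK 0 (Nat.zero_le n))
  rw [newtonPoly, eval_finsetSum, sum_range_succ']
  simp only [Function.iterate_zero, id, Nat.factorial_zero, Nat.cast_one, div_one,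
    descPochhammer_zero, eval_mul, eval_C, mul_one, add_sub_cancel_right]
  refine ((abs_sum_le_sum_abs _ _).trans (sum_le_card_nsmul _ _ _ fun k hk => ?_)).trans_eq
    (by rw [card_range, nsmul_eq_mul])
  have hkn : k + 1 ≤ n := by simpa using hk
  have hdiff := abs_fdiff_iter_le (k := k + 1) fun i hi => hK i (hi.trans hkn)
  rw [abs_mul, abs_div, Nat.abs_cast]
  calc |(fdiff y)^[k + 1] g x| / (k + 1)! * |(descPochhammer ℝ (k + 1)).eval s|
      ≤ 2 ^ (k + 1) * K / (k + 1)! * ((k + 1)! * s) := by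
        gcongr
        exact abs_eval_descPochhammer_le hs0 hs1 (Nat.le_add_left 1 k)
    _ = 2 ^ (k + 1) * K * s := by field_simp
    _ ≤ 2 ^ n * K * s := by gcongr; norm_num

namespace IsMonomial

variable {n : ℕ} {f : ℝ → ℝ}

lemma fdiff_iter_self (hf : IsMonomial n f) (x y : ℝ) : (fdiff y)^[n] f x = n ! * f y := by
  rw [← hf x y]
  field_simp

lemma fdiff_iter_eq_zero (hf : IsMonomial n f) (y : ℝ) {k : ℕ} (hk : n < k) :
    (fdiff y)^[k] f = 0 := by
  obtain ⟨m, rfl⟩ := Nat.exists_eq_add_of_lt hk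
  have hsucc : (fdiff y)^[n + 1] f = 0 := by
    ext x
    rw [Function.iterate_succ_apply']
    simp [fdiff, hf.fdiff_iter_self]
  rw [show n + m + 1 = m + (n + 1) by omega, Function.iterate_add_apply, hsucc]
  induction m with
  | zero => rfl
  | succ m ih => ext x; simp [Function.iterate_succ_apply', ih, fdiff]

lemma neg (hf : IsMonomial n f) : IsMonomial n (-f) := by
  have hiter : ∀ (h : ℝ) (k : ℕ), (fdiff h)^[k] (-f) = -(fdiff h)^[k] f := by
    intro h k
    induction k with
    | zero => rfl
    | succ k ih =>
      ext x
      simp only [Function.iterate_succ_apply', ih, fdiff, Pi.neg_apply]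
      ring
  intro x h
  simp [hiter, ← hf x h]

lemma eval_newtonPoly_natCast (hf : IsMonomial n f) (x y : ℝ) (j : ℕ) :
    (newtonPoly n f x y).eval (j : ℝ) = f (x + j * y) :=
  _root_.eval_newtonPoly_natCast (fun _ hk => congrFun (hf.fdiff_iter_eq_zero y hk) x) j

lemma coeff_newtonPoly (hf : IsMonomial n f) (x y : ℝ) : (newtonPoly n f x y).coeff n = f y := by
  rw [coeff_newtonPoly_self, hf.fdiff_iter_self]
  field_simp

/-- Newton's formula only reaches the points `x + j y` with `j ∈ ℕ`. Restarted at `x - N y` with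
step `y / b` it reaches `x + q y`, and after reparametrisation it agrees with the polynomial at `x`
with step `y` on all naturals, hence everywhere. -/
lemma eval_newtonPoly_ratCast (hf : IsMonomial n f) (x y : ℝ) (q : ℚ) :
    f (x + q * y) = (newtonPoly n f x y).eval (q : ℝ) := by
  set b : ℕ := q.den
  set N : ℕ := q.num.natAbs
  have hb : (b : ℝ) ≠ 0 := by positivity
  set R : ℝ[X] := (newtonPoly n f (x - N * y) (y / b)).comp (C (b : ℝ) * (X + C (N : ℝ)))
  have hR : ∀ m : ℕ, R.eval ((m : ℝ) / b - N) = f (x + ((m : ℝ) / b - N) * y) := by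
    intro m
    simp only [R, eval_comp, eval_mul, eval_C, eval_add, eval_X, sub_add_cancel,
      mul_div_cancel₀ _ hb, hf.eval_newtonPoly_natCast]
    congr 1
    field_simp
    ring
  have hRP : R = newtonPoly n f x y := Polynomial.eq_of_eval_natCast_eq fun j => by
    have := hR (b * (j + N))
    push_cast at this
    rw [mul_div_cancel_left₀ _ hb, add_sub_cancel_right] at this
    rw [this, hf.eval_newtonPoly_natCast]
  obtain ⟨m, hm⟩ : ∃ m : ℕ, q.num + b * N = (m : ℤ) := by
    refine Int.eq_ofNat_of_zero_le ?_
    have : (1 : ℤ) ≤ b := by exact_mod_cast q.pos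
    rw [Int.natCast_natAbs]
    nlinarith [neg_abs_le q.num, abs_nonneg q.num]
  have hmq : (m : ℝ) / b - N = q := by
    have : (m : ℝ) = q.num + b * N := by exact_mod_cast hm.symm
    rw [this, Rat.cast_def]
    field_simp
    ring
  rw [← hRP, ← hmq, hR]

lemma map_ratCast_mul (hf : IsMonomial n f) (q : ℚ) (y : ℝ) : f (q * y) = q ^ n * f y := by
  have hcomp : newtonPoly n f 0 (q * y) = (newtonPoly n f 0 y).comp (C (q : ℝ) * X) :=
    Polynomial.eq_of_eval_natCast_eq fun j => by
      have := hf.eval_newtonPoly_ratCast 0 y (q * j)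
      push_cast at this
      simp only [eval_comp, eval_mul, eval_C, eval_X, ← this, hf.eval_newtonPoly_natCast]
      ring_nf
  have := congrArg (coeff · n) hcomp
  simp only [comp_C_mul_X_coeff, hf.coeff_newtonPoly] at this
  rw [this, mul_comm]

lemma exists_bound_of_bddNear (hf : IsMonomial n f) {δ M : ℝ} (hδ : 0 < δ)
    (hM : ∀ w, |w| < δ → |f w| ≤ M) (R : ℝ) : ∃ K, ∀ u, |u| ≤ R → |f u| ≤ K := by
  obtain ⟨q, hq⟩ := exists_rat_gt (max (R / δ) 0)
  have hq0 : (0 : ℝ) < q := (le_max_right _ _).trans_lt hq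
  refine ⟨q ^ n * M, fun u hu => ?_⟩
  have hsmall : |u / q| < δ := by
    rw [abs_div, abs_of_pos hq0, div_lt_iff₀ hq0]
    have := (le_max_left _ _).trans_lt hq
    rw [div_lt_iff₀ hδ] at this
    linarith
  rw [← mul_div_cancel₀ u hq0.ne', hf.map_ratCast_mul, abs_mul, abs_of_pos (pow_pos hq0 n)]
  exact mul_le_mul_of_nonneg_left (hM _ hsmall) (by positivity)

/-- Write `u - x = q y` with `q ∈ ℚ`, `|u - x| < q < 2 |u - x|`: the Newton polynomial at `x` with
step `y` has values bounded independently of `u` at `0, …, n`, so it moves by `O(q)` on `[0, q]`. -/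
lemma continuous_of_bddNear (hf : IsMonomial n f) {δ M : ℝ} (hδ : 0 < δ)
    (hM : ∀ w, |w| < δ → |f w| ≤ M) : Continuous f := by
  refine continuous_iff_continuousAt.mpr fun x => ?_
  obtain ⟨K, hK⟩ := hf.exists_bound_of_bddNear hδ hM (|x| + n)
  refine continuousAt_of_locally_lipschitz one_half_pos (n * (2 ^ n * K * 2)) fun u hu => ?_
  rw [Real.dist_eq] at hu ⊢
  rcases eq_or_ne u x with rfl | hux
  · simp
  have ht : 0 < |u - x| := abs_pos.mpr (sub_ne_zero.mpr hux)
  obtain ⟨q, hq1, hq2⟩ := exists_rat_btwn (by linarith : |u - x| < 2 * |u - x|)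
  have hq0 : (0 : ℝ) < q := ht.trans hq1
  set y := (u - x) / q
  have hy : |y| ≤ 1 := by
    rw [abs_div, abs_of_pos hq0, div_le_one hq0]
    exact hq1.le
  have hvals : ∀ i ≤ n, |f (x + i * y)| ≤ K := fun i hi => hK _ <| by
    calc |x + i * y| ≤ |x| + |i * y| := abs_add_le _ _
      _ ≤ |x| + n := by
          rw [abs_mul, Nat.abs_cast]
          have : (i : ℝ) ≤ n := by exact_mod_cast hi
          nlinarith [abs_nonneg y, Nat.cast_nonneg (α := ℝ) i]
  have hfu : f u = (newtonPoly n f x y).eval (q : ℝ) := by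
    rw [← hf.eval_newtonPoly_ratCast, mul_div_cancel₀ _ hq0.ne', add_sub_cancel]
  have hK0 : 0 ≤ K := (abs_nonneg _).trans (hK 0 (by simp; positivity))
  rw [hfu]
  refine (abs_eval_newtonPoly_sub_le hq0.le (by linarith) hvals).trans ?_
  calc (n : ℝ) * (2 ^ n * K * q) ≤ n * (2 ^ n * K * (2 * |u - x|)) := by gcongr
    _ = n * (2 ^ n * K * 2) * |u - x| := by ring

lemma exists_abs_lt_of_unbounded (hf : IsMonomial n f)
    (hunb : ∀ δ > 0, ∀ M, ∃ w, |w| < δ ∧ M < |f w|) (x : ℝ) {δ : ℝ} (hδ : 0 < δ) (M : ℝ) :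
    ∃ w, |w| < δ ∧ ∃ j ≤ n, M < |f (x + j * w)| := by
  by_contra! hsmall
  obtain ⟨w, hw, hfw⟩ := hunb δ hδ (2 ^ n * M)
  have hbound := abs_fdiff_iter_le (hsmall w hw)
  rw [hf.fdiff_iter_self, abs_mul, Nat.abs_cast] at hbound
  have : |f w| ≤ n ! * |f w| :=
    le_mul_of_one_le_left (abs_nonneg _) (by exact_mod_cast n.factorial_pos)
  linarith

lemma mk_eval_newtonPoly_mem_closure_graph (hf : IsMonomial n f) (x y s : ℝ) :
    (x + s * y, (newtonPoly n f x y).eval s) ∈ closure f.graph :=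
  isClosed_property Rat.denseRange_cast
    (isClosed_closure.preimage (f := fun s => (x + s * y, (newtonPoly n f x y).eval s))
      (by fun_prop))
    (fun q => subset_closure (hf.eval_newtonPoly_ratCast x y q)) s

lemma ray_subset_closure_graph (hf : IsMonomial n f) (x : ℝ)
    (hlarge : ∀ δ > 0, ∀ M, ∃ w, |w| < δ ∧ ∃ j ≤ n, M < f (x + j * w)) :
    {x} ×ˢ Ici (f x) ⊆ closure f.graph := by
  rintro ⟨x', T⟩ ⟨hx' : x' = x, hT : f x ≤ T⟩
  subst x'
  rw [← closure_closure, Metric.mem_closure_iff]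
  intro ε hε
  obtain ⟨w, hw, j, hj, hTj⟩ := hlarge (ε / (n + 1)) (by positivity) T
  set P := newtonPoly n f x w
  have hP0 : P.eval 0 = f x := by simpa using hf.eval_newtonPoly_natCast x w 0
  have hPj : P.eval (j : ℝ) = f (x + j * w) := hf.eval_newtonPoly_natCast x w j
  obtain ⟨s, hs, hPs⟩ := intermediate_value_Icc (Nat.cast_nonneg j) P.continuous.continuousOn
    ⟨hP0.symm ▸ hT, hPj.symm ▸ hTj.le⟩
  refine ⟨(x + s * w, T), hPs ▸ hf.mk_eval_newtonPoly_mem_closure_graph x w s, ?_⟩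
  rw [Prod.dist_eq, Real.dist_eq, Real.dist_eq, sub_self, abs_zero, max_eq_left (abs_nonneg _),
    sub_add_cancel_left, abs_neg, abs_mul, abs_of_nonneg hs.1]
  rw [lt_div_iff₀ (by positivity)] at hw
  have : s ≤ n := hs.2.trans (by exact_mod_cast hj)
  nlinarith [abs_nonneg w]

lemma ray_subset_closure_graph_or_neg (hf : IsMonomial n f)
    (hunb : ∀ δ > 0, ∀ M, ∃ w, |w| < δ ∧ M < |f w|) (x : ℝ) :
    {x} ×ˢ Ici (f x) ⊆ closure f.graph ∨ {x} ×ˢ Ici ((-f) x) ⊆ closure (-f).graph := by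
  by_cases hlarge : ∀ δ > 0, ∀ M, ∃ w, |w| < δ ∧ ∃ j ≤ n, M < f (x + j * w)
  · exact Or.inl (hf.ray_subset_closure_graph x hlarge)
  right
  push Not at hlarge
  obtain ⟨δ₀, hδ₀, M₀, hM₀⟩ := hlarge
  refine hf.neg.ray_subset_closure_graph x fun δ hδ M => ?_
  obtain ⟨w, hw, j, hj, hfw⟩ :=
    hf.exists_abs_lt_of_unbounded hunb x (lt_min hδ hδ₀) (max M₀ M)
  have hle := hM₀ w (hw.trans_le (min_le_right _ _)) j hj
  refine ⟨w, hw.trans_le (min_le_left _ _), j, hj, ?_⟩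
  rw [Pi.neg_apply]
  rcases lt_abs.mp hfw with h | h <;> linarith [le_max_left M₀ M, le_max_right M₀ M]

lemma mapsTo_closure_graph_smul (hf : IsMonomial n f) (q : ℚ) :
    MapsTo (fun p : ℝ × ℝ => ((q : ℝ) * p.1, (q : ℝ) ^ n * p.2)) (closure f.graph)
      (closure f.graph) :=
  MapsTo.closure (fun p (hp : f p.1 = p.2) => show f _ = _ by rw [hf.map_ratCast_mul, hp])
    (by fun_prop)

lemma eventually_mem_closure_graph (hf : IsMonomial n f) (hn : Even n) {p : ℝ} (hp : p ≠ 0)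
    (hray : {p} ×ˢ Ici (f p) ⊆ closure f.graph) (x : ℝ) :
    ∀ᶠ T in atTop, (x, T) ∈ closure f.graph := by
  filter_upwards [eventually_gt_atTop (f p / p ^ n * x ^ n)] with T hT
  let U := {s : ℝ | s ^ n * f p < T}
  have hU : IsOpen U := isOpen_lt (by fun_prop) continuous_const
  have hxU : x / p ∈ U := by
    calc (x / p) ^ n * f p = f p / p ^ n * x ^ n := by rw [div_pow]; ring
      _ < T := hT
  have hdense : Dense (range ((↑) : ℚ → ℝ) \ {0}) := Rat.denseRange_cast.sdiff_singleton 0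
  have hsub : U ∩ (range ((↑) : ℚ → ℝ) \ {0}) ⊆ {s | (s * p, T) ∈ closure f.graph} := by
    rintro _ ⟨hqU, ⟨q, rfl⟩, hq0⟩
    have hqn : 0 < (q : ℝ) ^ n := hn.pow_pos hq0
    have hmem : (p, T / (q : ℝ) ^ n) ∈ closure f.graph :=
      hray ⟨rfl, show f p ≤ _ by rw [le_div_iff₀ hqn, mul_comm]; exact hqU.le⟩
    simpa [mul_div_cancel₀ _ hqn.ne'] using hf.mapsTo_closure_graph_smul q hmem
  have := closure_minimal hsub (isClosed_closure.preimage (by fun_prop))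
    (hdense.open_subset_closure_inter hU hxU)
  simpa [div_mul_cancel₀ _ hp] using this

end IsMonomial

lemma dense_of_eventually_mem_closure_graph {f : ℝ → ℝ}
    (h : ∀ x, ∀ᶠ T in atTop, (x, T) ∈ closure f.graph) :
    Dense {q : ℝ × ℝ × ℝ | q.2.2 = f (q.1 + q.2.1) - f q.1} := by
  let Ψ : (ℝ × ℝ) × (ℝ × ℝ) → ℝ × ℝ × ℝ := fun uv =>
    (uv.1.1, uv.2.1 - uv.1.1, uv.2.2 - uv.1.2)
  have hΨ : MapsTo Ψ (closure (f.graph ×ˢ f.graph))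
      (closure {q : ℝ × ℝ × ℝ | q.2.2 = f (q.1 + q.2.1) - f q.1}) :=
    MapsTo.closure (fun uv ⟨(hu : f uv.1.1 = uv.1.2), (hv : f uv.2.1 = uv.2.2)⟩ =>
      show _ = _ by simp [Ψ, hu, hv]) (by fun_prop)
  rintro ⟨a, b, c⟩
  obtain ⟨T, ha, hb⟩ :=
    ((h a).and ((tendsto_atTop_add_const_right _ c tendsto_id).eventually (h (a + b)))).exists
  have hmem : ((a, T), (a + b, T + c)) ∈ closure (f.graph ×ˢ f.graph) := by
    rw [closure_prod_eq]
    exact ⟨ha, hb⟩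
  simpa [Ψ] using hΨ hmem

lemma dense_of_dense_neg {f : ℝ → ℝ}
    (h : Dense {q : ℝ × ℝ × ℝ | q.2.2 = (-f) (q.1 + q.2.1) - (-f) q.1}) :
    Dense {q : ℝ × ℝ × ℝ | q.2.2 = f (q.1 + q.2.1) - f q.1} := by
  let e : ℝ × ℝ × ℝ ≃ₜ ℝ × ℝ × ℝ :=
    (Homeomorph.refl ℝ).prodCongr ((Homeomorph.refl ℝ).prodCongr (Homeomorph.neg ℝ))
  convert h.preimage e.isOpenMap using 1
  ext ⟨a, b, c⟩
  change c = f (a + b) - f a ↔ -c = -f (a + b) - -f a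
  constructor <;> intro hc <;> linarith

theorem stmt17 (n : ℕ) (hn : Even n) (f : ℝ → ℝ) (hf : IsMonomial n f)
    (hdisc : ¬ Continuous f) :
    Dense {q : ℝ × ℝ × ℝ | q.2.2 = f (q.1 + q.2.1) - f q.1} := by
  have hunb : ∀ δ > 0, ∀ M, ∃ w, |w| < δ ∧ M < |f w| := by
    by_contra! hbdd
    obtain ⟨δ, hδ, M, hM⟩ := hbdd
    exact hdisc (hf.continuous_of_bddNear hδ hM)
  rcases hf.ray_subset_closure_graph_or_neg hunb 1 with hray | hray
  · exact dense_of_eventually_mem_closure_graph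
      (hf.eventually_mem_closure_graph hn one_ne_zero hray)
  · exact dense_of_dense_neg <| dense_of_eventually_mem_closure_graph
      (hf.neg.eventually_mem_closure_graph hn one_ne_zero hray)
end
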